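/- Let a11, a12, a21, a22, b1, b2 be positive reals with d12 := a11*a22 - a12*a21 > 0 and a12*b2 = a22*b1. Define V(x1, x2) = x1^(a22) * x2^(-a12) on (0,∞)². Then V is positive on (0,∞)², and its derivative along the Lotka-Volterra flow satisfies V̇(x1,x2) = -d12 * x1^(a22+1) * x2^(-a12) < 0 for all (x1,x2) ∈ (0,∞)². -/

import Mathlib

/-!
Along the flow, the logarithmic derivative of `x1 ^ a22 * x2 ^ (-a12)` is the combination
`a22 * (ẋ1 / x1) - a12 * (ẋ2 / x2)` of the per-capita growth rates. These are affine in
`(x1, x2)`, and the weights are chosen so that the `x2`-terms cancel; the constant term is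
`a22 * b1 - a12 * b2 = 0`, leaving `-(a11 * a22 - a12 * a21) * x1`.
-/

/-- The vector field of the 2D competitive Lotka-Volterra system. -/
noncomputable def LV (a11 a12 a21 a22 b1 b2 : ℝ) : ℝ × ℝ → ℝ × ℝ :=
  fun p => (p.1 * (b1 - a11 * p.1 - a12 * p.2), p.2 * (b2 - a21 * p.1 - a22 * p.2))

open Real

lemma fderiv_rpow_mul_rpow_apply {x y : ℝ} (hx : x ≠ 0) (hy : y ≠ 0) (a b : ℝ) (v : ℝ × ℝ) :
    fderiv ℝ (fun p : ℝ × ℝ => p.1 ^ a * p.2 ^ b) (x, y) v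
      = x ^ a * y ^ b * (a * (v.1 / x) + b * (v.2 / y)) := by
  have h1 := (hasFDerivAt_fst (p := (x, y))).rpow_const (p := a) (Or.inl hx)
  have h2 := (hasFDerivAt_snd (p := (x, y))).rpow_const (p := b) (Or.inl hy)
  have h : HasFDerivAt (fun p : ℝ × ℝ => p.1 ^ a * p.2 ^ b) _ (x, y) := h1.mul h2
  rw [h.fderiv]
  simp only [add_apply, smul_apply,
    ContinuousLinearMap.coe_fst', ContinuousLinearMap.coe_snd', smul_eq_mul]
  rw [rpow_sub_one hx, rpow_sub_one hy]
  field_simp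
  ring

lemma LV_log_rate_combination (a11 a12 a21 a22 b1 b2 : ℝ) {x1 x2 : ℝ}
    (hx1 : x1 ≠ 0) (hx2 : x2 ≠ 0) :
    a22 * ((LV a11 a12 a21 a22 b1 b2 (x1, x2)).1 / x1)
        + -a12 * ((LV a11 a12 a21 a22 b1 b2 (x1, x2)).2 / x2)
      = (a22 * b1 - a12 * b2) - (a11 * a22 - a12 * a21) * x1 := by
  simp only [LV]
  field_simp
  ring

theorem stmt_15_general (a11 a12 a21 a22 b1 b2 : ℝ)
    (hd12 : 0 < a11 * a22 - a12 * a21)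
    (hd122 : a12 * b2 = a22 * b1)
    (V : ℝ × ℝ → ℝ)
    (hV : V = fun p => p.1 ^ a22 * p.2 ^ (-a12)) :
    ∀ x1 x2 : ℝ, 0 < x1 → 0 < x2 →
      0 < V (x1, x2) ∧
      fderiv ℝ V (x1, x2) (LV a11 a12 a21 a22 b1 b2 (x1, x2))
        = -(a11 * a22 - a12 * a21) * x1 ^ (a22 + 1) * x2 ^ (-a12) ∧
      fderiv ℝ V (x1, x2) (LV a11 a12 a21 a22 b1 b2 (x1, x2)) < 0 := by
  intro x1 x2 hx1 hx2
  subst hV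
  have hVdot : fderiv ℝ (fun p : ℝ × ℝ => p.1 ^ a22 * p.2 ^ (-a12)) (x1, x2)
        (LV a11 a12 a21 a22 b1 b2 (x1, x2))
      = -(a11 * a22 - a12 * a21) * x1 ^ (a22 + 1) * x2 ^ (-a12) := by
    rw [fderiv_rpow_mul_rpow_apply hx1.ne' hx2.ne',
      LV_log_rate_combination _ _ _ _ _ _ hx1.ne' hx2.ne', hd122, sub_self, zero_sub,
      rpow_add_one hx1.ne']
    ring
  refine ⟨by positivity, hVdot, ?_⟩
  rw [hVdot, neg_mul, neg_mul, neg_lt_zero]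
  positivity

theorem stmt_15 (a11 a12 a21 a22 b1 b2 : ℝ)
    (ha11 : 0 < a11) (ha12 : 0 < a12) (ha21 : 0 < a21) (ha22 : 0 < a22)
    (hb1 : 0 < b1) (hb2 : 0 < b2)
    (hd12 : 0 < a11 * a22 - a12 * a21)
    (hd122 : a12 * b2 = a22 * b1)
    (V : ℝ × ℝ → ℝ)
    (hV : V = fun p => p.1 ^ a22 * p.2 ^ (-a12)) :
    ∀ x1 x2 : ℝ, 0 < x1 → 0 < x2 →
      0 < V (x1, x2) ∧
      fderiv ℝ V (x1, x2) (LV a11 a12 a21 a22 b1 b2 (x1, x2))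
        = -(a11 * a22 - a12 * a21) * x1 ^ (a22 + 1) * x2 ^ (-a12) ∧
      fderiv ℝ V (x1, x2) (LV a11 a12 a21 a22 b1 b2 (x1, x2)) < 0 :=
  stmt_15_general a11 a12 a21 a22 b1 b2 hd12 hd122 V hV
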